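/- T(Tx) = -∑_{i=0}^{k} cos²θᵢ · Pᵢx for every x ∈ W; that is, T² = -∑_{i=0}^{k} cos²θᵢ · Pᵢ on W (Lemma le6 (ii), tangential identity, in fiberwise form). -/

import Mathlib

open scoped RealInnerProductSpace

/-!
On each `Dᵢ` the map `T` is skew-adjoint (it is the compression of the skew-adjoint `J` to `W`),
preserves `Dᵢ` and scales norms by `cᵢ = cos θᵢ`; on `D₀` this holds with `c₀ = 1` because there
`T = J`. Hence for `x ∈ Dᵢ` we get `⟪T (T x), x⟫ = -‖T x‖² = -cᵢ² ‖x‖²` and `‖T (T x)‖ = cᵢ² ‖x‖`,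
the equality case of Cauchy–Schwarz, so `T (T x) = -cᵢ² x`. Summing over the decomposition
`x = ∑ Pᵢ x` gives the claim.
-/

section

variable {V : Type*} [NormedAddCommGroup V] [InnerProductSpace ℝ V]

theorem eq_neg_smul_of_inner_eq_of_norm_le {u x : V} {a : ℝ}
    (hinner : ⟪u, x⟫ = -(a * ‖x‖ ^ 2)) (hnorm : ‖u‖ ≤ a * ‖x‖) : u = -(a • x) := by
  have hsq : ‖u‖ ^ 2 ≤ (a * ‖x‖) ^ 2 := pow_le_pow_left₀ (norm_nonneg u) hnorm 2
  have hzero : ‖u + a • x‖ ^ 2 ≤ 0 := by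
    rw [norm_add_sq_real, real_inner_smul_right, hinner, norm_smul, Real.norm_eq_abs, mul_pow,
      sq_abs]
    nlinarith
  rw [eq_neg_iff_add_eq_zero, ← norm_eq_zero]
  nlinarith [norm_nonneg (u + a • x)]

theorem inner_map_left_eq_neg_inner_map_right {J : V →ₗ[ℝ] V}
    (hJinner : ∀ x y : V, ⟪J x, J y⟫ = ⟪x, y⟫) (hJsq : ∀ x : V, J (J x) = -x) (x y : V) :
    ⟪J x, y⟫ = -⟪x, J y⟫ := by
  rw [← hJinner x (J y), hJsq, inner_neg_right, neg_neg]

theorem norm_map_eq_of_inner_map_map {J : V →ₗ[ℝ] V}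
    (hJinner : ∀ x y : V, ⟪J x, J y⟫ = ⟪x, y⟫) (x : V) : ‖J x‖ = ‖x‖ := by
  rw [norm_eq_sqrt_re_inner (𝕜 := ℝ), norm_eq_sqrt_re_inner (𝕜 := ℝ), hJinner]

theorem map_map_eq_neg_sq_smul_of_norm_map_eq {A : V →ₗ[ℝ] V} {D : Submodule ℝ V} {c : ℝ}
    (hskew : ∀ x ∈ D, ∀ y ∈ D, ⟪A x, y⟫ = -⟪x, A y⟫) (hAD : ∀ x ∈ D, A x ∈ D)
    (hnorm : ∀ x ∈ D, ‖A x‖ = c * ‖x‖) {x : V} (hx : x ∈ D) :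
    A (A x) = -(c ^ 2 • x) := by
  apply eq_neg_smul_of_inner_eq_of_norm_le
  · rw [hskew _ (hAD x hx) x hx, real_inner_self_eq_norm_sq, hnorm x hx]
    ring
  · rw [hnorm _ (hAD x hx), hnorm x hx]
    linarith

section Tangential

variable {J T N : V →ₗ[ℝ] V} {W : Submodule ℝ V}

theorem inner_tangential_left_eq_inner_map (hN : ∀ x ∈ W, N x ∈ Wᗮ)
    (hTN : ∀ x ∈ W, J x = T x + N x) {x y : V} (hx : x ∈ W) (hy : y ∈ W) :
    ⟪T x, y⟫ = ⟪J x, y⟫ := by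
  rw [hTN x hx, inner_add_left, (W.mem_orthogonal' _).mp (hN x hx) y hy, add_zero]

theorem inner_tangential_left_eq_neg_inner_tangential_right
    (hJinner : ∀ x y : V, ⟪J x, J y⟫ = ⟪x, y⟫) (hJsq : ∀ x : V, J (J x) = -x)
    (hN : ∀ x ∈ W, N x ∈ Wᗮ) (hTN : ∀ x ∈ W, J x = T x + N x)
    {x y : V} (hx : x ∈ W) (hy : y ∈ W) :
    ⟪T x, y⟫ = -⟪x, T y⟫ := by
  rw [inner_tangential_left_eq_inner_map hN hTN hx hy,
    inner_map_left_eq_neg_inner_map_right hJinner hJsq, real_inner_comm (J y),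
    ← inner_tangential_left_eq_inner_map hN hTN hy hx, real_inner_comm (T y)]

theorem tangential_eq_of_map_mem (hT : ∀ x ∈ W, T x ∈ W) (hN : ∀ x ∈ W, N x ∈ Wᗮ)
    (hTN : ∀ x ∈ W, J x = T x + N x) {x : V} (hx : x ∈ W) (hJx : J x ∈ W) : T x = J x := by
  have hNx : N x ∈ W := by
    rw [eq_sub_of_add_eq' (hTN x hx).symm]
    exact W.sub_mem hJx (hT x hx)
  rw [hTN x hx, Submodule.disjoint_def.mp W.orthogonal_disjoint _ hNx (hN x hx), add_zero]

end Tangential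

end

theorem T_sq_eq_neg_sum_cos_sq_proj_general
    {V : Type*} [NormedAddCommGroup V] [InnerProductSpace ℝ V]
    (J : V →ₗ[ℝ] V)
    (hJinner : ∀ x y : V, ⟪J x, J y⟫ = ⟪x, y⟫)
    (hJsq : ∀ x : V, J (J x) = -x)
    (W : Submodule ℝ V)
    (T N : V →ₗ[ℝ] V)
    (hT : ∀ x ∈ W, T x ∈ W)
    (hN : ∀ x ∈ W, N x ∈ Wᗮ)
    (hTN : ∀ x ∈ W, J x = T x + N x)
    (k : ℕ)
    (D : Fin (k+1) → Submodule ℝ V)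
    (hDW : ∀ i, D i ≤ W)
    (hinv : ∀ x ∈ D 0, J x ∈ D 0)
    (hTD : ∀ i : Fin (k+1), i ≠ 0 → ∀ x ∈ D i, T x ∈ D i)
    (θ : Fin (k+1) → ℝ)
    (hθ0 : θ 0 = 0)
    (hslant : ∀ i : Fin (k+1), i ≠ 0 → ∀ x ∈ D i, ‖T x‖ = Real.cos (θ i) * ‖x‖)
    (P : Fin (k+1) → V →ₗ[ℝ] V)
    (hPmem : ∀ i x, P i x ∈ D i)
    (hPsum : ∀ x ∈ W, x = ∑ i, P i x) :
    ∀ x ∈ W, T (T x) = -∑ i, (Real.cos (θ i)) ^ 2 • P i x := by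
  have hT0 : ∀ x ∈ D 0, T x = J x := fun x hx =>
    tangential_eq_of_map_mem hT hN hTN (hDW 0 hx) (hDW 0 (hinv x hx))
  have hTD' : ∀ i, ∀ x ∈ D i, T x ∈ D i := by
    intro i x hx
    rcases eq_or_ne i 0 with rfl | hi
    · exact hT0 x hx ▸ hinv x hx
    · exact hTD i hi x hx
  have hslant' : ∀ i, ∀ x ∈ D i, ‖T x‖ = Real.cos (θ i) * ‖x‖ := by
    intro i x hx
    rcases eq_or_ne i 0 with rfl | hi
    · rw [hT0 x hx, norm_map_eq_of_inner_map_map hJinner, hθ0, Real.cos_zero, one_mul]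
    · exact hslant i hi x hx
  intro x hx
  calc T (T x) = ∑ i, T (T (P i x)) := by rw [← map_sum, ← map_sum, ← hPsum x hx]
    _ = ∑ i, -(Real.cos (θ i) ^ 2 • P i x) := Finset.sum_congr rfl fun i _ =>
        map_map_eq_neg_sq_smul_of_norm_map_eq
          (fun y hy z hz => inner_tangential_left_eq_neg_inner_tangential_right hJinner hJsq hN hTN
            (hDW i hy) (hDW i hz))
          (hTD' i) (hslant' i) (hPmem i x)
    _ = -∑ i, Real.cos (θ i) ^ 2 • P i x := Finset.sum_neg_distrib _

/-- Lemma le6 (ii), tangential identity, fiberwise: `T² = -∑ᵢ cos²θᵢ · Pᵢ` on `W`. -/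
theorem T_sq_eq_neg_sum_cos_sq_proj
    {V : Type*} [NormedAddCommGroup V] [InnerProductSpace ℝ V] [FiniteDimensional ℝ V]
    (J : V →ₗ[ℝ] V)
    (hJinner : ∀ x y : V, ⟪J x, J y⟫ = ⟪x, y⟫)
    (hJsq : ∀ x : V, J (J x) = -x)
    (W : Submodule ℝ V)
    (T N : V →ₗ[ℝ] V)
    (hT : ∀ x ∈ W, T x ∈ W)
    (hN : ∀ x ∈ W, N x ∈ Wᗮ)
    (hTN : ∀ x ∈ W, J x = T x + N x)
    (k : ℕ)
    (D : Fin (k+1) → Submodule ℝ V)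
    (hDW : ∀ i, D i ≤ W)
    (hDorth : ∀ i j, i ≠ j → ∀ x ∈ D i, ∀ y ∈ D j, ⟪x, y⟫ = 0)
    (hinv : ∀ x ∈ D 0, J x ∈ D 0)
    (hTD : ∀ i : Fin (k+1), i ≠ 0 → ∀ x ∈ D i, T x ∈ D i)
    (θ : Fin (k+1) → ℝ)
    (hθ0 : θ 0 = 0)
    (hθ : ∀ i : Fin (k+1), i ≠ 0 → θ i ∈ Set.Ioc 0 (Real.pi / 2))
    (hslant : ∀ i : Fin (k+1), i ≠ 0 → ∀ x ∈ D i, ‖T x‖ = Real.cos (θ i) * ‖x‖)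
    (P : Fin (k+1) → V →ₗ[ℝ] V)
    (hPmem : ∀ i x, P i x ∈ D i)
    (hPorth : ∀ i x, ∀ y ∈ D i, ⟪x - P i x, y⟫ = 0)
    (hPsum : ∀ x ∈ W, x = ∑ i, P i x) :
    ∀ x ∈ W, T (T x) = -∑ i, (Real.cos (θ i)) ^ 2 • P i x :=
  T_sq_eq_neg_sum_cos_sq_proj_general J hJinner hJsq W T N hT hN hTN k D hDW hinv hTD θ hθ0 hslant P
    hPmem hPsum
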